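/- For every finite simple graph G, the tree cover number is at most the positive zero forcing number: T(G) ≤ Z_+(G). -/

import Mathlib

/-! Basic definitions for zero forcing and positive (semidefinite) zero forcing. -/

variable {V : Type*}

/-- The standard zero forcing colour change rule: a black vertex `u` (i.e. `u ∈ S`)
forces its unique white neighbour `w`. -/
def ZFForce (G : SimpleGraph V) (S : Set V) (u w : V) : Prop :=
  u ∈ S ∧ w ∉ S ∧ G.Adj u w ∧ ∀ x, G.Adj u x → x ∉ S → x = w

/-- `x` and `y` are joined by a path of `G` all of whose vertices avoid `S`,
i.e. they lie in the same connected component of `G − S`. -/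
def ConnOutside (G : SimpleGraph V) (S : Set V) : V → V → Prop :=
  Relation.ReflTransGen fun x y => x ∉ S ∧ y ∉ S ∧ G.Adj x y

/-- The positive (semidefinite) colour change rule: a black vertex `u` forces a white
neighbour `w` provided `w` is the only white neighbour of `u` lying in the connected
component of `G − S` containing `w`. -/
def PSDForce (G : SimpleGraph V) (S : Set V) (u w : V) : Prop :=
  u ∈ S ∧ w ∉ S ∧ G.Adj u w ∧
    ∀ x, G.Adj u x → x ∉ S → ConnOutside G S x w → x = w

/-- A list of forces, applied in order starting with black set `S`, is a valid sequence
of applications of the standard colour change rule. -/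
def ZFValid (G : SimpleGraph V) : Set V → List (V × V) → Prop
  | _, [] => True
  | S, p :: L => ZFForce G S p.1 p.2 ∧ ZFValid G (insert p.2 S) L

/-- A list of forces, applied in order starting with black set `S`, is a valid sequence
of applications of the positive colour change rule. -/
def PSDValid (G : SimpleGraph V) : Set V → List (V × V) → Prop
  | _, [] => True
  | S, p :: L => PSDForce G S p.1 p.2 ∧ PSDValid G (insert p.2 S) L

/-- The black set resulting from performing the given list of forces. -/
def applyForces (S : Set V) (L : List (V × V)) : Set V :=
  L.foldl (fun T p => insert p.2 T) S

/-- `B` is a zero forcing set: repeatedly applying the colour change rule starting from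
`B` colours every vertex black. -/
def IsZeroForcingSet (G : SimpleGraph V) (B : Set V) : Prop :=
  ∃ L : List (V × V), ZFValid G B L ∧ applyForces B L = Set.univ

/-- `B` is a positive zero forcing set. -/
def IsPSDForcingSet (G : SimpleGraph V) (B : Set V) : Prop :=
  ∃ L : List (V × V), PSDValid G B L ∧ applyForces B L = Set.univ

/-- The zero forcing number `Z(G)`. -/
noncomputable def zfNum (G : SimpleGraph V) : ℕ :=
  sInf {n | ∃ B : Set V, B.ncard = n ∧ IsZeroForcingSet G B}

/-- The positive (semidefinite) zero forcing number `Z₊(G)`. -/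
noncomputable def psdNum (G : SimpleGraph V) : ℕ :=
  sInf {n | ∃ B : Set V, B.ncard = n ∧ IsPSDForcingSet G B}

/-- A clique cover of `G`: a finite family of cliques covering every edge of `G`. -/
def IsCliqueCover (G : SimpleGraph V) (𝒞 : Finset (Set V)) : Prop :=
  (∀ C ∈ 𝒞, G.IsClique C) ∧ ∀ u v, G.Adj u v → ∃ C ∈ 𝒞, u ∈ C ∧ v ∈ C

/-- The clique cover number `cc(G)`. -/
noncomputable def ccNum (G : SimpleGraph V) : ℕ :=
  sInf {n | ∃ 𝒞 : Finset (Set V), 𝒞.card = n ∧ IsCliqueCover G 𝒞}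

/-- A tree cover of `G`: a family of vertex-disjoint induced subtrees whose vertex sets
partition `V(G)`. -/
def IsTreeCover (G : SimpleGraph V) (𝒯 : Finset (Set V)) : Prop :=
  (∀ S ∈ 𝒯, (G.induce S).IsTree) ∧
    (∀ S ∈ 𝒯, ∀ T ∈ 𝒯, S ≠ T → Disjoint S T) ∧
    ∀ v : V, ∃ S ∈ 𝒯, v ∈ S

/-- The tree cover number `T(G)`. -/
noncomputable def tcNum (G : SimpleGraph V) : ℕ :=
  sInf {n | ∃ 𝒯 : Finset (Set V), 𝒯.card = n ∧ IsTreeCover G 𝒯}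

/-- A graph is chordal if it contains no induced cycle on four or more vertices. -/
def IsChordal (G : SimpleGraph V) : Prop :=
  ∀ n, 4 ≤ n → IsEmpty (SimpleGraph.cycleGraph n ↪g G)

/-- `C` is a maximal clique of `G`. -/
def IsMaxClique (G : SimpleGraph V) (C : Set V) : Prop :=
  G.IsClique C ∧ ∀ D : Set V, G.IsClique D → C ⊆ D → C = D

/-- A chordal graph is non-trivial if it has at least two distinct maximal cliques. -/
def NonTrivialChordal (G : SimpleGraph V) : Prop :=
  IsChordal G ∧ ∃ C₁ C₂ : Set V, IsMaxClique G C₁ ∧ IsMaxClique G C₂ ∧ C₁ ≠ C₂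

/-- A vertex is simplicial if its neighbourhood induces a clique. -/
def IsSimplicial (G : SimpleGraph V) (v : V) : Prop :=
  G.IsClique (G.neighborSet v)

/-!
Record the forcing chains of a positive zero forcing process as a forest rooted at the initial
black set `B`: when `u` forces `y`, the vertex `y` becomes a child of `u`. The invariant is that
each component of the current white subgraph is adjacent to each tree in at most one vertex.
When `u` forces `y`, the vertex `u` is therefore the only vertex of its tree adjacent to `y`, so
every tree stays induced. A white component adjacent to both `y` and another vertex `x` of `u`'s
tree lies in the old component of `y`, so `x = u` would have a second white neighbour there,
which the positive colour change rule forbids; hence the invariant survives the force. Once every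
vertex is black, the `|B|` trees form a tree cover.
-/

namespace SimpleGraph

variable {W : Type*} {H : SimpleGraph W}

theorem isAcyclic_of_rank (t : W → ℕ)
    (lower_unique : ∀ v w w', H.Adj v w → H.Adj v w' → t w ≤ t v → t w' ≤ t v → w = w') :
    H.IsAcyclic := by
  classical
  intro v c hc
  obtain ⟨m, hm, hmax⟩ := c.support.toFinset.exists_max_image t ⟨v, by simp⟩
  rw [List.mem_toFinset] at hm
  -- A vertex of maximal rank on the cycle has two distinct cycle neighbours, both of rank at
  -- most its own.
  obtain ⟨w, w', hne, hnbr⟩ := Set.ncard_eq_two.mp (hc.ncard_neighborSet_toSubgraph_eq_two hm)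
  have lower_nbr : ∀ x ∈ c.toSubgraph.neighborSet m, H.Adj m x ∧ t x ≤ t m := fun x hx =>
    ⟨c.toSubgraph.adj_sub hx,
      hmax x (List.mem_toFinset.mpr ((c.mem_verts_toSubgraph).mp (c.toSubgraph.edge_vert hx.symm)))⟩
  obtain ⟨hw, htw⟩ := lower_nbr w (by simp [hnbr])
  obtain ⟨hw', htw'⟩ := lower_nbr w' (by simp [hnbr])
  exact hne (lower_unique m w w' hw hw' htw htw')

theorem connected_of_rank (t : W → ℕ) (ρ : W)
    (exists_lower : ∀ v, v ≠ ρ → ∃ w, H.Adj v w ∧ t w < t v) : H.Connected := by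
  have reach : ∀ n v, t v < n → H.Reachable v ρ := by
    intro n
    induction n with
    | zero => intro v hv; omega
    | succ n ih =>
      intro v hv
      by_cases hvρ : v = ρ
      · exact hvρ ▸ .rfl
      · obtain ⟨w, hvw, htw⟩ := exists_lower v hvρ
        exact hvw.reachable.trans (ih w (by omega))
  have : Nonempty W := ⟨ρ⟩
  exact .mk fun a b => (reach _ a (Nat.lt_succ_self _)).trans (reach _ b (Nat.lt_succ_self _)).symm

theorem isTree_of_rank (t : W → ℕ) (ρ : W)
    (exists_lower : ∀ v, v ≠ ρ → ∃ w, H.Adj v w ∧ t w < t v)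
    (lower_unique : ∀ v w w', H.Adj v w → H.Adj v w' → t w ≤ t v → t w' ≤ t v → w = w') :
    H.IsTree :=
  ⟨connected_of_rank t ρ exists_lower, isAcyclic_of_rank t lower_unique⟩

end SimpleGraph

theorem ConnOutside.mono {G : SimpleGraph V} {S S' : Set V} (h : S ⊆ S') {a b : V}
    (hab : ConnOutside G S' a b) : ConnOutside G S a b :=
  Relation.ReflTransGen.mono (fun _ _ ⟨hx, hy, hxy⟩ => ⟨fun hx' => hx (h hx'),
    fun hy' => hy (h hy'), hxy⟩) _ _ hab

theorem ConnOutside.symm {G : SimpleGraph V} {S : Set V} {a b : V} (hab : ConnOutside G S a b) :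
    ConnOutside G S b a :=
  have : Std.Symm fun x y => x ∉ S ∧ y ∉ S ∧ G.Adj x y :=
    ⟨fun _ _ ⟨hx, hy, hxy⟩ => ⟨hy, hx, hxy.symm⟩⟩
  Std.Symm.symm (r := Relation.ReflTransGen _) _ _ hab

/-- The forest of forcing chains grown from `B` while `S` is black: `r v` is the root of the tree
of `v`, and in the ranking `t` the parent of a vertex is its only tree neighbour of no larger
rank. -/
structure IsForcingForest (G : SimpleGraph V) (B S : Set V) (r : V → V) (t : V → ℕ) : Prop where
  subset : B ⊆ S
  root_mem : ∀ v ∈ S, r v ∈ B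
  root_eq_self : ∀ v ∈ B, r v = v
  exists_lower : ∀ v ∈ S, v ∉ B → ∃ w ∈ S, r w = r v ∧ G.Adj v w ∧ t w < t v
  lower_unique : ∀ v ∈ S, ∀ w ∈ S, ∀ w' ∈ S, r w = r v → r w' = r v →
    G.Adj v w → G.Adj v w' → t w ≤ t v → t w' ≤ t v → w = w'
  separation : ∀ w₁ w₂, w₁ ∉ S → w₂ ∉ S → ConnOutside G S w₁ w₂ →
    ∀ x₁ ∈ S, ∀ x₂ ∈ S, G.Adj x₁ w₁ → G.Adj x₂ w₂ → r x₁ = r x₂ → x₁ = x₂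

namespace IsForcingForest

variable {G : SimpleGraph V} {B S : Set V} {r : V → V} {t : V → ℕ}

theorem init : IsForcingForest G B B id 0 where
  subset := subset_rfl
  root_mem _ hv := hv
  root_eq_self _ _ := rfl
  exists_lower _ hv hv' := absurd hv hv'
  lower_unique _ _ _ _ _ _ hw _ hvw _ _ _ := absurd hw (hvw.ne ·.symm)
  separation _ _ _ _ _ _ _ _ _ _ _ h := h

theorem isTree_induce_fiber (hF : IsForcingForest G B Set.univ r t) {c : V} (hc : c ∈ B) :
    (G.induce {v | r v = c}).IsTree := by
  refine SimpleGraph.isTree_of_rank (fun v => t v) ⟨c, hF.root_eq_self c hc⟩ ?_ ?_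
  · intro v hvc
    have hvB : (v : V) ∉ B := fun hvB =>
      hvc (Subtype.ext ((hF.root_eq_self v hvB).symm.trans v.2))
    obtain ⟨w, -, hrw, hvw, htw⟩ := hF.exists_lower v trivial hvB
    exact ⟨⟨w, hrw.trans v.2⟩, hvw, htw⟩
  · intro v w w' hvw hvw' htw htw'
    exact Subtype.ext (hF.lower_unique v trivial w trivial w' trivial (w.2.trans v.2.symm)
      (w'.2.trans v.2.symm) hvw hvw' htw htw')

theorem isTreeCover_fibers (hF : IsForcingForest G B Set.univ r t) (hB : B.Finite) :
    IsTreeCover G (hB.toFinset.image fun c => {v | r v = c}) := by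
  simp only [IsTreeCover, Finset.mem_image, Set.Finite.mem_toFinset]
  refine ⟨?_, ?_, fun v => ⟨_, ⟨r v, hF.root_mem v trivial, rfl⟩, rfl⟩⟩
  · rintro _ ⟨c, hc, rfl⟩
    exact hF.isTree_induce_fiber hc
  · rintro _ ⟨c, -, rfl⟩ _ ⟨c', -, rfl⟩ hne
    exact Set.disjoint_left.mpr fun v (hv : r v = c) (hv' : r v = c') =>
      hne (by rw [← hv, ← hv'])

theorem tcNum_le_ncard (hF : IsForcingForest G B Set.univ r t) (hB : B.Finite) :
    tcNum G ≤ B.ncard :=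
  calc tcNum G ≤ (hB.toFinset.image fun c => {v | r v = c}).card :=
        Nat.sInf_le ⟨_, rfl, hF.isTreeCover_fibers hB⟩
    _ ≤ hB.toFinset.card := Finset.card_image_le
    _ = B.ncard := (Set.ncard_eq_toFinset_card B hB).symm

variable [DecidableEq V] {u y : V}

theorem separation_insert (hF : IsForcingForest G B S r t) (hf : PSDForce G S u y) :
    ∀ w₁ w₂, w₁ ∉ insert y S → w₂ ∉ insert y S → ConnOutside G (insert y S) w₁ w₂ →
      ∀ x₁ ∈ insert y S, ∀ x₂ ∈ insert y S, G.Adj x₁ w₁ → G.Adj x₂ w₂ →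
        Function.update r y (r u) x₁ = Function.update r y (r u) x₂ → x₁ = x₂ := by
  obtain ⟨huS, hyS, huy, hrule⟩ := hf
  have hne : ∀ x ∈ S, x ≠ y := fun x hx hxy => hyS (hxy ▸ hx)
  have no_mixed : ∀ w₁ w₂, w₁ ∉ insert y S → w₂ ∉ insert y S →
      ConnOutside G (insert y S) w₁ w₂ → G.Adj y w₁ → ∀ x ∈ S, G.Adj x w₂ → r x = r u → False := by
    intro w₁ w₂ hw₁ hw₂ hconn hyw₁ x hx hxw₂ hrx
    simp only [Set.mem_insert_iff, not_or] at hw₁ hw₂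
    have hw₂y : ConnOutside G S w₂ y :=
      (hconn.mono (Set.subset_insert y S)).symm.tail ⟨hw₁.2, hyS, hyw₁.symm⟩
    have hxu : x = u := hF.separation w₂ y hw₂.2 hyS hw₂y x hx u huS hxw₂ huy hrx
    exact hw₂.1 (hrule w₂ (hxu ▸ hxw₂) hw₂.2 hw₂y)
  intro w₁ w₂ hw₁ hw₂ hconn x₁ hx₁ x₂ hx₂ h₁ h₂ hr
  rcases hx₁ with rfl | hx₁ <;> rcases hx₂ with rfl | hx₂
  · rfl
  · rw [Function.update_self, Function.update_of_ne (hne x₂ hx₂)] at hr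
    exact (no_mixed w₁ w₂ hw₁ hw₂ hconn h₁ x₂ hx₂ h₂ hr.symm).elim
  · rw [Function.update_self, Function.update_of_ne (hne x₁ hx₁)] at hr
    exact (no_mixed w₂ w₁ hw₂ hw₁ hconn.symm h₂ x₁ hx₁ h₁ hr).elim
  · rw [Function.update_of_ne (hne x₁ hx₁), Function.update_of_ne (hne x₂ hx₂)] at hr
    simp only [Set.mem_insert_iff, not_or] at hw₁ hw₂
    exact hF.separation w₁ w₂ hw₁.2 hw₂.2 (hconn.mono (Set.subset_insert y S)) x₁ hx₁ x₂ hx₂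
      h₁ h₂ hr

theorem lower_unique_insert (hF : IsForcingForest G B S r t) (hf : PSDForce G S u y) :
    ∀ v ∈ insert y S, ∀ w ∈ insert y S, ∀ w' ∈ insert y S,
      Function.update r y (r u) w = Function.update r y (r u) v →
      Function.update r y (r u) w' = Function.update r y (r u) v → G.Adj v w → G.Adj v w' →
      Function.update t y (t u + 1) w ≤ Function.update t y (t u + 1) v →
      Function.update t y (t u + 1) w' ≤ Function.update t y (t u + 1) v → w = w' := by
  obtain ⟨huS, hyS, huy, -⟩ := hf
  have hne : ∀ x ∈ S, x ≠ y := fun x hx hxy => hyS (hxy ▸ hx)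
  have hr : ∀ x ∈ S, Function.update r y (r u) x = r x := fun x hx =>
    Function.update_of_ne (hne x hx) _ _
  have ht : ∀ x ∈ S, Function.update t y (t u + 1) x = t x := fun x hx =>
    Function.update_of_ne (hne x hx) _ _
  have adj_y : ∀ x ∈ S, G.Adj x y → r x = r u → x = u := fun x hx hxy hrx =>
    hF.separation y y hyS hyS .refl x hx u huS hxy huy hrx
  rintro v (rfl | hv) w (rfl | hw) w' (rfl | hw') hrw hrw' hvw hvw' htw htw'
  · exact (hvw.ne rfl).elim
  · exact (hvw.ne rfl).elim
  · exact (hvw'.ne rfl).elim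
  · rw [Function.update_self, hr w hw] at hrw
    rw [Function.update_self, hr w' hw'] at hrw'
    exact (adj_y w hw hvw.symm hrw).trans (adj_y w' hw' hvw'.symm hrw').symm
  · rfl
  · rw [Function.update_self, hr v hv] at hrw
    rw [Function.update_self, ht v hv, adj_y v hv hvw hrw.symm] at htw
    omega
  · rw [Function.update_self, hr v hv] at hrw'
    rw [Function.update_self, ht v hv, adj_y v hv hvw' hrw'.symm] at htw'
    omega
  · rw [hr v hv, hr w hw] at hrw
    rw [hr v hv, hr w' hw'] at hrw'
    rw [ht v hv, ht w hw] at htw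
    rw [ht v hv, ht w' hw'] at htw'
    exact hF.lower_unique v hv w hw w' hw' hrw hrw' hvw hvw' htw htw'

theorem force (hF : IsForcingForest G B S r t) (hf : PSDForce G S u y) :
    IsForcingForest G B (insert y S) (Function.update r y (r u))
      (Function.update t y (t u + 1)) := by
  have hlow := hF.lower_unique_insert hf
  have hsep := hF.separation_insert hf
  obtain ⟨huS, hyS, huy, -⟩ := hf
  have hne : ∀ x ∈ S, x ≠ y := fun x hx hxy => hyS (hxy ▸ hx)
  refine ⟨hF.subset.trans (Set.subset_insert y S), ?_, ?_, ?_, hlow, hsep⟩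
  · rintro v (rfl | hv)
    · simpa using hF.root_mem u huS
    · simpa [hne v hv] using hF.root_mem v hv
  · intro v hv
    rw [Function.update_of_ne (hne v (hF.subset hv))]
    exact hF.root_eq_self v hv
  · rintro v (rfl | hv) hvB
    · exact ⟨u, Set.mem_insert_of_mem _ huS, by simp [hne u huS], huy.symm, by simp [hne u huS]⟩
    · obtain ⟨w, hw, hrw, hvw, htw⟩ := hF.exists_lower v hv hvB
      exact ⟨w, Set.mem_insert_of_mem _ hw, by simp [hne w hw, hne v hv, hrw], hvw,
        by simpa [hne w hw, hne v hv] using htw⟩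

theorem exists_of_psdValid (L : List (V × V)) (hF : IsForcingForest G B S r t)
    (hL : PSDValid G S L) : ∃ (r' : V → V) (t' : V → ℕ),
      IsForcingForest G B (applyForces S L) r' t' := by
  induction L generalizing S r t with
  | nil => exact ⟨r, t, hF⟩
  | cons p L ih => exact ih (hF.force hL.1) hL.2

end IsForcingForest

theorem IsPSDForcingSet.exists_isForcingForest [DecidableEq V] {G : SimpleGraph V} {B : Set V}
    (hB : IsPSDForcingSet G B) : ∃ (r : V → V) (t : V → ℕ), IsForcingForest G B Set.univ r t := by
  obtain ⟨L, hL, hall⟩ := hB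
  rw [← hall]
  exact IsForcingForest.init.exists_of_psdValid L hL

/-- For every finite simple graph, the tree cover number is at most
the positive zero forcing number: `T(G) ≤ Z₊(G)`. -/
theorem tcNum_le_psdNum {V : Type*} [Fintype V] (G : SimpleGraph V) :
    tcNum G ≤ psdNum G := by
  classical
  refine le_csInf ⟨_, Set.univ, rfl, [], trivial, rfl⟩ ?_
  rintro _ ⟨B, rfl, hB⟩
  obtain ⟨r, t, hF⟩ := hB.exists_isForcingForest
  exact hF.tcNum_le_ncard B.toFinite
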